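/- For a positive definite matrix S ∈ Sym_l(ℝ), R ∈ M_{n,l}(ℝ), A ∈ Sym_n(ℂ) with Re(aA) positive definite for a ∈ ℂ^× (so the integral converges), one has ∫_{M_{l,n}(ℝ)} exp(a·tr(−S[X]A + RXA)) dX = (det A)^{−l/2} (π/a)^{nl/2} (det S)^{−n/2} exp((a/4)·tr(S^{-1}[Rᵀ]A)), where S[X] = XᵀSX and S^{-1}[Rᵀ] = R S^{-1} Rᵀ. -/

import Mathlib

/-!
Write `S = PᵀP` and `A = QᵀQ`. The substitution `Y = P X Qᵀ` has Jacobian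
`|det P|ⁿ |det Q|ˡ = (det S)^{n/2} (det A)^{l/2}` and turns the exponent into
`∑ᵢⱼ (-a Yᵢⱼ² + a Cⱼᵢ Yᵢⱼ)` with `C = Q R P⁻¹`, so the integral factors into `nl`
one-dimensional integrals `∫ exp(-a t² + c t) dt = √(π/a) exp(c²/4a)`.
Finally `∑ᵢⱼ Cⱼᵢ² = tr(C Cᵀ) = tr(R S⁻¹ Rᵀ A)`.
-/

open Matrix MeasureTheory

theorem integral_exp_neg_mul_sq_add_mul {b : ℝ} (hb : 0 < b) (c : ℝ) :
    ∫ x : ℝ, Real.exp (-b * x ^ 2 + c * x) = √(Real.pi / b) * Real.exp (c ^ 2 / (4 * b)) := by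
  have hsq (x : ℝ) : -b * x ^ 2 + c * x = -b * (x - c / (2 * b)) ^ 2 + c ^ 2 / (4 * b) := by
    field_simp; ring
  simp_rw [hsq, Real.exp_add, integral_mul_const,
    integral_sub_right_eq_self (fun x => Real.exp (-b * x ^ 2)), integral_gaussian]

theorem integral_exp_sum_neg_mul_sq_add_mul {ι : Type*} [Fintype ι] {b : ℝ} (hb : 0 < b)
    (c : ι → ℝ) :
    ∫ v : ι → ℝ, Real.exp (∑ i, (-b * v i ^ 2 + c i * v i))
      = √(Real.pi / b) ^ Fintype.card ι * Real.exp ((∑ i, c i ^ 2) / (4 * b)) := by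
  simp_rw [Real.exp_sum, integral_fintype_prod_volume_eq_prod
    (fun i x => Real.exp (-b * x ^ 2 + c i * x)), integral_exp_neg_mul_sq_add_mul hb,
    Finset.prod_mul_distrib, Finset.prod_const, Finset.sum_div, Real.exp_sum, Finset.card_univ]

theorem integral_exp_sum_sum_neg_mul_sq_add_mul {ι κ : Type*} [Fintype ι] [Fintype κ] {b : ℝ}
    (hb : 0 < b) (c : ι → κ → ℝ) :
    ∫ Y : ι → κ → ℝ, Real.exp (∑ i, ∑ j, (-b * Y i j ^ 2 + c i j * Y i j))
      = √(Real.pi / b) ^ (Fintype.card ι * Fintype.card κ)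
        * Real.exp ((∑ i, ∑ j, c i j ^ 2) / (4 * b)) := by
  simp_rw [Real.exp_sum (s := Finset.univ (α := ι)), integral_fintype_prod_volume_eq_prod
    (fun i (v : κ → ℝ) => Real.exp (∑ j, (-b * v j ^ 2 + c i j * v j))),
    integral_exp_sum_neg_mul_sq_add_mul hb, Finset.prod_mul_distrib, Finset.prod_const,
    Finset.sum_div, Real.exp_sum, Finset.card_univ, ← pow_mul, mul_comm]

theorem MeasureTheory.Measure.integral_comp_linearMap {E F : Type*} [NormedAddCommGroup E]
    [NormedSpace ℝ E] [MeasurableSpace E] [BorelSpace E] [FiniteDimensional ℝ E]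
    [NormedAddCommGroup F] [NormedSpace ℝ F] (μ : Measure E) [μ.IsAddHaarMeasure]
    {f : E →ₗ[ℝ] E} (hf : LinearMap.det f ≠ 0) (g : E → F) :
    ∫ x, g (f x) ∂μ = |LinearMap.det f|⁻¹ • ∫ x, g x ∂μ := by
  have hbij : Function.Bijective f :=
    (Module.End.isUnit_iff f).1 ((LinearMap.isUnit_iff_isUnit_det f).2 hf.isUnit)
  let e := (LinearEquiv.ofBijective f hbij).toContinuousLinearEquiv
  rw [← show ∫ x, g x ∂(μ.map e) = ∫ x, g (f x) ∂μ from
      e.toHomeomorph.measurableEmbedding.integral_map g,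
    show ⇑e = f from rfl, Measure.map_linearMap_addHaar_eq_smul_addHaar μ hf,
    integral_smul_measure, ENNReal.toReal_ofReal (abs_nonneg _), abs_inv]

theorem Matrix.det_mulRightLinearMap {l n R : Type*} [Fintype l] [Fintype n] [DecidableEq n]
    [CommRing R] (Q : Matrix n n R) :
    LinearMap.det (mulRightLinearMap l R Q) = Q.det ^ Fintype.card l := by
  let e := (ofLinearEquiv R : (l → n → R) ≃ₗ[R] Matrix l n R)
  have hrows : e.symm.toLinearMap ∘ₗ mulRightLinearMap l R Q ∘ₗ e =
      LinearMap.pi fun i => toLin' Qᵀ ∘ₗ LinearMap.proj i := by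
    ext X i j
    simp [e, Matrix.mul_apply, Matrix.mulVec, dotProduct, mul_comm]
  rw [← LinearMap.det_conj _ e.symm, LinearEquiv.symm_symm, hrows, LinearMap.det_pi,
    LinearMap.det_toLin', det_transpose, Finset.prod_const, Finset.card_univ]

theorem Matrix.det_mulLeftLinearMap {m n R : Type*} [Fintype m] [DecidableEq m] [Fintype n]
    [CommRing R] (P : Matrix m m R) :
    LinearMap.det (mulLeftLinearMap n R P) = P.det ^ Fintype.card n := by
  let e := transposeLinearEquiv n m R R
  have htranspose :
      mulLeftLinearMap n R P = e.toLinearMap ∘ₗ mulRightLinearMap n R Pᵀ ∘ₗ e.symm := by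
    ext X : 1
    simp [e, transpose_mul]
  rw [htranspose, LinearMap.det_conj, det_mulRightLinearMap, det_transpose]

theorem Matrix.integral_comp_mul_mul {m n F : Type*} [Fintype m] [DecidableEq m] [Fintype n]
    [DecidableEq n] [NormedAddCommGroup F] [NormedSpace ℝ F] {P : Matrix m m ℝ}
    {Q : Matrix n n ℝ} (hP : P.det ≠ 0) (hQ : Q.det ≠ 0) (g : Matrix m n ℝ → F) :
    ∫ X : m → n → ℝ, g (P * of X * Q)
      = (|P.det| ^ Fintype.card n * |Q.det| ^ Fintype.card m)⁻¹ •
          ∫ X : m → n → ℝ, g (of X) := by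
  let e := (ofLinearEquiv ℝ : (m → n → ℝ) ≃ₗ[ℝ] Matrix m n ℝ)
  let f := e.symm.toLinearMap ∘ₗ (mulLeftLinearMap n ℝ P ∘ₗ mulRightLinearMap m ℝ Q) ∘ₗ
    e.toLinearMap
  have hf : LinearMap.det f = P.det ^ Fintype.card n * Q.det ^ Fintype.card m := by
    rw [← det_mulLeftLinearMap, ← det_mulRightLinearMap, ← LinearMap.det_comp,
      ← LinearMap.det_conj _ e.symm, LinearEquiv.symm_symm]
  have := Measure.integral_comp_linearMap volume (f := f) (by rw [hf]; simp [hP, hQ]) (g ∘ of)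
  rw [hf, abs_mul, abs_pow, abs_pow] at this
  simpa [f, e, Matrix.mul_assoc] using this

theorem Matrix.PosSemidef.exists_eq_transpose_mul_self {m : Type*} [Fintype m]
    [DecidableEq m] {S : Matrix m m ℝ} (hS : S.PosSemidef) : ∃ P, S = Pᵀ * P := by
  open MatrixOrder in
  exact ⟨CFC.sqrt S, by rw [← conjTranspose_eq_transpose_of_trivial,
    (CFC.sqrt_nonneg S).posSemidef.isHermitian.eq, CFC.sqrt_mul_sqrt_self S hS.nonneg]⟩

section Trace

variable {m n R : Type*} [Fintype m] [Fintype n] [CommRing R]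

theorem Matrix.trace_mul_eq_sum_sum (C : Matrix n m R) (Y : Matrix m n R) :
    (C * Y).trace = ∑ i, ∑ j, C j i * Y i j := by
  rw [trace, Finset.sum_comm]
  rfl

theorem Matrix.trace_transpose_mul_self_eq_sum_sq (Y : Matrix m n R) :
    (Yᵀ * Y).trace = ∑ i, ∑ j, Y i j ^ 2 := by
  simp [trace_mul_eq_sum_sum, sq]

theorem Matrix.trace_mul_transpose_self_eq_sum_sq (C : Matrix n m R) :
    (C * Cᵀ).trace = ∑ i, ∑ j, C j i ^ 2 := by
  simp [trace_mul_eq_sum_sum, sq]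

variable (P : Matrix m m R) (Q : Matrix n n R) (X : Matrix m n R)

theorem Matrix.trace_quadratic_eq_trace_sandwich :
    (Xᵀ * (Pᵀ * P) * X * (Qᵀ * Q)).trace = ((P * X * Qᵀ)ᵀ * (P * X * Qᵀ)).trace := by
  simp only [transpose_mul, transpose_transpose, Matrix.mul_assoc]
  rw [trace_mul_comm Q]
  simp only [Matrix.mul_assoc]

variable [DecidableEq m]

theorem Matrix.trace_linear_eq_trace_sandwich (hP : IsUnit P.det) (B : Matrix n m R) :
    (B * X * (Qᵀ * Q)).trace = (Q * B * P⁻¹ * (P * X * Qᵀ)).trace := by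
  simp only [Matrix.mul_assoc]
  rw [trace_mul_comm Q]
  simp only [Matrix.mul_assoc, nonsing_inv_mul_cancel_left _ _ hP]

theorem Matrix.trace_inv_eq_trace_mul_transpose (B : Matrix n m R) :
    (B * (Pᵀ * P)⁻¹ * Bᵀ * (Qᵀ * Q)).trace = (Q * B * P⁻¹ * (Q * B * P⁻¹)ᵀ).trace := by
  simp only [transpose_mul, transpose_nonsing_inv, mul_inv_rev, Matrix.mul_assoc]
  rw [trace_mul_comm Q]
  simp only [Matrix.mul_assoc]

end Trace

theorem Real.mul_self_rpow_neg_div_two (x : ℝ) (k : ℕ) :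
    (x * x) ^ (-(k : ℝ) / 2) = (|x| ^ k)⁻¹ := by
  rw [neg_div, Real.rpow_neg (mul_self_nonneg x), Real.rpow_div_two_eq_sqrt _ (mul_self_nonneg x),
    Real.sqrt_mul_self_eq_abs, Real.rpow_natCast]

theorem matrix_gaussian_integral_general (n l : ℕ) (a : ℝ) (ha : 0 < a)
    (S : Matrix (Fin l) (Fin l) ℝ) (hS : S.PosDef)
    (A : Matrix (Fin n) (Fin n) ℝ) (hA : A.PosDef)
    (R : Matrix (Fin n) (Fin l) ℝ) :
    ∫ X : Fin l → Fin n → ℝ,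
        Real.exp (a * (-(((Matrix.of X)ᵀ * S * Matrix.of X) * A).trace
          + ((R * Matrix.of X) * A).trace))
      = A.det ^ (-(l : ℝ) / 2) * (Real.pi / a) ^ (((n : ℝ) * l) / 2) *
        S.det ^ (-(n : ℝ) / 2) *
        Real.exp ((a / 4) * ((R * S⁻¹ * Rᵀ) * A).trace) := by
  obtain ⟨P, rfl⟩ := hS.posSemidef.exists_eq_transpose_mul_self
  obtain ⟨Q, rfl⟩ := hA.posSemidef.exists_eq_transpose_mul_self
  have hP : P.det ≠ 0 := by simpa using hS.det_pos.ne'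
  have hQ : Q.det ≠ 0 := by simpa using hA.det_pos.ne'
  have hexponent (X : Fin l → Fin n → ℝ) :
      a * (-((of X)ᵀ * (Pᵀ * P) * of X * (Qᵀ * Q)).trace + (R * of X * (Qᵀ * Q)).trace)
        = ∑ i, ∑ j, (-a * (P * of X * Qᵀ) i j ^ 2
            + a * (Q * R * P⁻¹) j i * (P * of X * Qᵀ) i j) := by
    rw [trace_quadratic_eq_trace_sandwich, trace_linear_eq_trace_sandwich P Q _ hP.isUnit,
      trace_transpose_mul_self_eq_sum_sq, trace_mul_eq_sum_sum]
    simp only [Finset.mul_sum, ← Finset.sum_neg_distrib, ← Finset.sum_add_distrib]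
    ring_nf
  simp_rw [hexponent]
  rw [integral_comp_mul_mul hP (by simpa using hQ)
    (fun Y => Real.exp (∑ i, ∑ j, (-a * Y i j ^ 2 + a * (Q * R * P⁻¹) j i * Y i j)))]
  simp only [of_apply]
  rw [integral_exp_sum_sum_neg_mul_sq_add_mul ha, trace_inv_eq_trace_mul_transpose P Q,
    trace_mul_transpose_self_eq_sum_sq]
  have hcoeff (s : ℝ) : a ^ 2 * s / (4 * a) = a / 4 * s := by field_simp
  simp only [det_mul, det_transpose, Fintype.card_fin, mul_pow, ← Finset.mul_sum, hcoeff,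
    smul_eq_mul]
  rw [Real.mul_self_rpow_neg_div_two, Real.mul_self_rpow_neg_div_two,
    Real.rpow_div_two_eq_sqrt _ (div_pos Real.pi_pos ha).le, ← Nat.cast_mul, Real.rpow_natCast]
  ring

/-- Matrix Gaussian integral: for `S ∈ Sym_l(ℝ)` positive definite,
`R ∈ M_{n,l}(ℝ)`, `A ∈ Sym_n(ℝ)` positive definite and `a > 0`,
`∫ exp(a tr(−XᵀSX·A + RXA)) dX = (det A)^{−l/2}(π/a)^{nl/2}(det S)^{−n/2}
  exp((a/4) tr(RS⁻¹Rᵀ A))`. -/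
theorem matrix_gaussian_integral (n l : ℕ) (a : ℝ) (ha : 0 < a)
    (S : Matrix (Fin l) (Fin l) ℝ) (hSsym : S.IsSymm) (hS : S.PosDef)
    (A : Matrix (Fin n) (Fin n) ℝ) (hAsym : A.IsSymm) (hA : A.PosDef)
    (R : Matrix (Fin n) (Fin l) ℝ) :
    ∫ X : Fin l → Fin n → ℝ,
        Real.exp (a * (-(((Matrix.of X)ᵀ * S * Matrix.of X) * A).trace
          + ((R * Matrix.of X) * A).trace))
      = A.det ^ (-(l : ℝ) / 2) * (Real.pi / a) ^ (((n : ℝ) * l) / 2) *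
        S.det ^ (-(n : ℝ) / 2) *
        Real.exp ((a / 4) * ((R * S⁻¹ * Rᵀ) * A).trace) :=
  matrix_gaussian_integral_general n l a ha S hS A hA R
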